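/- Assume the action of G on Z is free. If an element t ∈ H fixes some point of the form (z₀, g•z₀) ∈ Z × Z (for some z₀ ∈ Z and g ∈ G), then t fixes the whole set T_g = {(z, g•z) | z ∈ Z} pointwise, i.e. t(z, g•z) = (z, g•z) for every z ∈ Z. -/
import Mathlib


/-- The swap permutation `σ(z,w) = (w,z)` of `Z × Z`. -/
def sw (Z : Type*) : Equiv.Perm (Z × Z) := Equiv.prodComm Z Z

/-- The permutation `s_g(z,w) = (z, g • w)` of `Z × Z`. -/
def sMap {Z G : Type*} [Group G] [MulAction G Z] (g : G) : Equiv.Perm (Z × Z) :=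
  Equiv.prodCongr (Equiv.refl Z) (MulAction.toPerm g)

/-- The permutation `δ_g(z,w) = (g • z, g • w)` of `Z × Z`. -/
def dMap {Z G : Type*} [Group G] [MulAction G Z] (g : G) : Equiv.Perm (Z × Z) :=
  Equiv.prodCongr (MulAction.toPerm g) (MulAction.toPerm g)

/-- The subgroup `J` generated by `σ` and all `s_g`, `g ∈ G`. -/
def Jgrp (Z G : Type*) [Group G] [MulAction G Z] : Subgroup (Equiv.Perm (Z × Z)) :=
  Subgroup.closure ({sw Z} ∪ Set.range (sMap : G → Equiv.Perm (Z × Z)))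

/-- The subgroup `H` generated by `σ` and all `δ_g`, `g ∈ G`. -/
def Hgrp (Z G : Type*) [Group G] [MulAction G Z] : Subgroup (Equiv.Perm (Z × Z)) :=
  Subgroup.closure ({sw Z} ∪ Set.range (dMap : G → Equiv.Perm (Z × Z)))

lemma sw_mem_J (Z G : Type*) [Group G] [MulAction G Z] : sw Z ∈ Jgrp Z G :=
  Subgroup.subset_closure (Set.mem_union_left _ rfl)

lemma sMap_mem_J {Z G : Type*} [Group G] [MulAction G Z] (g : G) :
    sMap (Z := Z) g ∈ Jgrp Z G :=
  Subgroup.subset_closure (Set.mem_union_right _ ⟨g, rfl⟩)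

lemma dMap_apply {Z G : Type*} [Group G] [MulAction G Z] (a : G) (p : Z × Z) :
    dMap (Z := Z) a p = (a • p.1, a • p.2) := rfl

lemma sw_apply {Z : Type*} (p : Z × Z) : sw Z p = (p.2, p.1) := rfl

lemma dMap_mul {Z G : Type*} [Group G] [MulAction G Z] (a b : G) :
    dMap (Z := Z) (a * b) = dMap a * dMap b := by
  ext p <;> simp [dMap_apply, mul_smul, Equiv.Perm.mul_apply]

lemma sw_mul_dMap {Z G : Type*} [Group G] [MulAction G Z] (a : G) :
    sw Z * dMap (Z := Z) a = dMap a * sw Z := by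
  ext p <;> simp [dMap_apply, sw_apply, Equiv.Perm.mul_apply]

lemma sw_sw {Z : Type*} : sw Z * sw Z = 1 := by
  ext p <;> simp [sw_apply, Equiv.Perm.mul_apply]

lemma Hgrp_cases {Z G : Type*} [Group G] [MulAction G Z]
    (t : Equiv.Perm (Z × Z)) (ht : t ∈ Hgrp Z G) :
    ∃ a : G, t = dMap a ∨ t = dMap a * sw Z := by
  induction ht using Subgroup.closure_induction with
  | mem x hx =>
    rcases hx with hx | ⟨a, rfl⟩
    · exact ⟨1, Or.inr (by subst hx; ext p <;> simp [dMap_apply, sw_apply, Equiv.Perm.mul_apply])⟩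
    · exact ⟨a, Or.inl rfl⟩
  | one => exact ⟨1, Or.inl (by ext p <;> simp [dMap_apply])⟩
  | mul x y _ _ hx hy =>
    obtain ⟨a, ha⟩ := hx
    obtain ⟨b, hb⟩ := hy
    rcases ha with rfl | rfl <;> rcases hb with rfl | rfl
    · exact ⟨a * b, Or.inl (dMap_mul a b).symm⟩
    · exact ⟨a * b, Or.inr (by rw [dMap_mul, mul_assoc])⟩
    · exact ⟨a * b, Or.inr (by rw [dMap_mul, mul_assoc, mul_assoc, sw_mul_dMap])⟩
    · refine ⟨a * b, Or.inl ?_⟩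
      rw [dMap_mul]
      calc dMap (Z := Z) a * sw Z * (dMap b * sw Z)
          = dMap a * (sw Z * dMap b) * sw Z := by group
        _ = dMap a * (dMap b * sw Z) * sw Z := by rw [sw_mul_dMap]
        _ = dMap a * dMap b * (sw Z * sw Z) := by group
        _ = dMap a * dMap b := by rw [sw_sw, mul_one]
  | inv x _ hx =>
    obtain ⟨a, ha⟩ := hx
    rcases ha with rfl | rfl
    · refine ⟨a⁻¹, Or.inl ?_⟩
      rw [eq_comm, eq_inv_iff_mul_eq_one, ← dMap_mul, inv_mul_cancel]
      ext p <;> simp [dMap_apply]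
    · refine ⟨a⁻¹, Or.inr ?_⟩
      rw [eq_comm, eq_inv_iff_mul_eq_one, mul_assoc, ← mul_assoc (sw Z),
        sw_mul_dMap, mul_assoc, sw_sw, mul_one, ← dMap_mul, inv_mul_cancel]
      ext p <;> simp [dMap_apply]

theorem stmt11 {Z G : Type*} [Group G] [MulAction G Z]
    (hfree : ∀ (g : G) (z : Z), g • z = z → g = 1)
    (t : Equiv.Perm (Z × Z)) (ht : t ∈ Hgrp Z G) (g : G) (z₀ : Z)
    (hfix : t (z₀, g • z₀) = (z₀, g • z₀)) :
    ∀ z : Z, t (z, g • z) = (z, g • z) := by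
  obtain ⟨a, rfl | rfl⟩ := Hgrp_cases t ht
  · rw [dMap_apply] at hfix
    have ha : a = 1 := hfree a z₀ (congrArg Prod.fst hfix)
    intro z; simp [dMap_apply, ha]
  · have hfix' : (a • g • z₀, a • z₀) = (z₀, g • z₀) := hfix
    have h1 : a • g • z₀ = z₀ := congrArg Prod.fst hfix'
    have h2 : a • z₀ = g • z₀ := congrArg Prod.snd hfix'
    have hag : a * g = 1 := hfree (a * g) z₀ (by rwa [mul_smul])
    have ha : a = g⁻¹ := by rw [eq_inv_iff_mul_eq_one]; exact hag
    have hg2 : g * g = 1 := by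
      refine hfree (g * g) z₀ ?_
      rw [mul_smul, ← h2, ha, smul_inv_smul]
    have hginv : g⁻¹ = g := by rw [eq_comm, eq_inv_iff_mul_eq_one]; exact hg2
    intro z
    show (a • g • z, a • z) = (z, g • z)
    rw [ha, inv_smul_smul, hginv]
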